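/- Let the unit square [0,1]² be recursively dissected into boxes such that each box at depth t of the dissection tree has at most ⌈n/2^t⌉ points of an n-point set, each cut bisects the point count, and the recursion stops when boxes contain Θ(1/ε²) points, yielding boxes at depth O(log(nε²)). If moreover at each level of the tree the total perimeter of all rectangles at that level is O(√(number of rectangles at that level)) (bounded aspect ratio and area summing to 1), then the sum of perimeters of all leaf boxes satisfies Σ_{b} |∂b| = O(ε√n). -/
import Mathlib


/-- Karp's perimeter lemma: for `m ≤ c₁·ε²·n` axis-parallel rectangles of
bounded aspect ratio `ρ` whose areas sum to at most `1`, the sum of their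
perimeters is `O(ε·√n)`. -/
theorem stmt_16 (ρ c₁ : ℝ) (hρ : 1 ≤ ρ) (hc₁ : 0 < c₁) :
    ∃ C : ℝ, 0 < C ∧
      ∀ (m n : ℕ) (ε : ℝ) (w h : Fin m → ℝ),
        0 < ε →
        (∀ i, 0 < w i ∧ 0 < h i ∧ w i / h i ≤ ρ ∧ h i / w i ≤ ρ) →
        (∑ i, w i * h i) ≤ 1 →
        (m : ℝ) ≤ c₁ * ε ^ 2 * (n : ℝ) →
        (∑ i, 2 * (w i + h i)) ≤ C * ε * Real.sqrt n := by
  have hρ0 : (0:ℝ) < ρ := lt_of_lt_of_le one_pos hρ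
  refine ⟨4 * Real.sqrt ρ * Real.sqrt c₁, by positivity, ?_⟩
  intro m n ε w h hε hwh hsum hm
  -- each perimeter ≤ 4√ρ √(area)
  have key : ∀ i, 2 * (w i + h i) ≤ 4 * Real.sqrt ρ * Real.sqrt (w i * h i) := by
    intro i
    obtain ⟨hw, hh, hwr, hhr⟩ := hwh i
    have hw2 : w i ≤ Real.sqrt ρ * Real.sqrt (w i * h i) := by
      have h1 : w i * w i ≤ ρ * (w i * h i) := by
        have := (div_le_iff₀ hh).mp hwr
        nlinarith
      have := Real.sqrt_le_sqrt h1
      rwa [Real.sqrt_mul_self hw.le, Real.sqrt_mul hρ0.le] at this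
    have hh2 : h i ≤ Real.sqrt ρ * Real.sqrt (w i * h i) := by
      have h1 : h i * h i ≤ ρ * (w i * h i) := by
        have := (div_le_iff₀ hw).mp hhr
        nlinarith
      have := Real.sqrt_le_sqrt h1
      rwa [Real.sqrt_mul_self hh.le, Real.sqrt_mul hρ0.le] at this
    nlinarith
  have hsum1 : (∑ i, 2 * (w i + h i)) ≤ 4 * Real.sqrt ρ * ∑ i, Real.sqrt (w i * h i) :=
    by rw [Finset.mul_sum]; exact Finset.sum_le_sum fun i _ => key i
  -- Cauchy–Schwarz: (Σ√aᵢ)² ≤ m Σaᵢ ≤ m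
  have hcs : (∑ i, Real.sqrt (w i * h i)) ≤ Real.sqrt m := by
    have h1 : (∑ i : Fin m, Real.sqrt (w i * h i)) ^ 2 ≤
        (m : ℝ) * ∑ i : Fin m, Real.sqrt (w i * h i) ^ 2 := by
      have := sq_sum_le_card_mul_sum_sq (s := (Finset.univ : Finset (Fin m)))
        (f := fun i => Real.sqrt (w i * h i))
      simpa using this
    have h2 : (∑ i : Fin m, Real.sqrt (w i * h i) ^ 2) = ∑ i, w i * h i := by
      refine Finset.sum_congr rfl fun i _ => ?_
      obtain ⟨hw, hh, _, _⟩ := hwh i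
      exact Real.sq_sqrt (by positivity)
    have h3 : (∑ i : Fin m, Real.sqrt (w i * h i)) ^ 2 ≤ (m : ℝ) := by
      calc _ ≤ (m : ℝ) * ∑ i, w i * h i := by rw [← h2]; exact h1
        _ ≤ (m : ℝ) * 1 := by
            exact mul_le_mul_of_nonneg_left hsum (Nat.cast_nonneg m)
        _ = m := mul_one _
    have h4 : (0:ℝ) ≤ ∑ i : Fin m, Real.sqrt (w i * h i) :=
      Finset.sum_nonneg fun i _ => Real.sqrt_nonneg _
    exact (Real.le_sqrt h4 (Nat.cast_nonneg m)).mpr h3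
  have hmn : Real.sqrt m ≤ Real.sqrt c₁ * (ε * Real.sqrt n) := by
    have : Real.sqrt m ≤ Real.sqrt (c₁ * ε ^ 2 * n) := Real.sqrt_le_sqrt hm
    calc Real.sqrt m ≤ Real.sqrt (c₁ * ε ^ 2 * n) := this
      _ = Real.sqrt c₁ * (ε * Real.sqrt n) := by
          rw [Real.sqrt_mul (by positivity), Real.sqrt_mul hc₁.le,
            Real.sqrt_sq hε.le, mul_assoc]
  calc (∑ i, 2 * (w i + h i)) ≤ 4 * Real.sqrt ρ * ∑ i, Real.sqrt (w i * h i) := hsum1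
    _ ≤ 4 * Real.sqrt ρ * (Real.sqrt c₁ * (ε * Real.sqrt n)) := by
        refine mul_le_mul_of_nonneg_left (hcs.trans hmn) (by positivity)
    _ = 4 * Real.sqrt ρ * Real.sqrt c₁ * ε * Real.sqrt n := by ring
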